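/- Let q be an annular link state on Z/n with t ≥ 1 defects, and p its rotation by one place. Then the pair graph Γ(q,p) has exactly t connected components, each of which is a path (contractible) containing exactly one defect of q and exactly one defect of p. If t = 0, then Γ(q,p) is a single cycle through all n vertices. -/

import Mathlib

open scoped Classical

/-- `k` lies in the open cyclic interval `(i, j)` of `ZMod n`. -/
def cyclicBetween (n : ℕ) [NeZero n] (i j k : ZMod n) : Prop :=
  ∃ m : ℕ, 0 < m ∧ m < (j - i).val ∧ k = i + (m : ZMod n)

/-- An annular link state on `ZMod n`: a partition into parts of size 1 (defects) and 2
(connections, recorded in `pairs`) such that whenever `i` and `j` are connected, the open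
cyclic intervals `(i,j)` and `(j,i)` are unions of parts, and all defects lie in `(i,j)`
or all lie in `(j,i)`. -/
structure AnnularLS (n : ℕ) [NeZero n] where
  pairs : Finset (Finset (ZMod n))
  card_two : ∀ s ∈ pairs, s.card = 2
  disj : ∀ s ∈ pairs, ∀ t ∈ pairs, s ≠ t → Disjoint s t
  interval_closed : ∀ s ∈ pairs, ∀ i ∈ s, ∀ j ∈ s, i ≠ j →
    ∀ t ∈ pairs, ∀ k ∈ t, ∀ l ∈ t,
      cyclicBetween n i j k → cyclicBetween n i j l
  defects_one_side : ∀ s ∈ pairs, ∀ i ∈ s, ∀ j ∈ s, i ≠ j →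
    (∀ d : ZMod n, (∀ t ∈ pairs, d ∉ t) → cyclicBetween n i j d) ∨
    (∀ d : ZMod n, (∀ t ∈ pairs, d ∉ t) → cyclicBetween n j i d)

/-- The defects of an annular link state. -/
noncomputable def AnnularLS.defects {n : ℕ} [NeZero n] (q : AnnularLS n) :
    Finset (ZMod n) :=
  Finset.univ.filter (fun i => ∀ s ∈ q.pairs, i ∉ s)

/-- The pair graph of two link states: `i` and `j` are adjacent if some connection of one
of the two link states joins them. -/
def pairGraph (n : ℕ) [NeZero n] (q p : AnnularLS n) : SimpleGraph (ZMod n) :=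
  SimpleGraph.fromRel (fun i j => ∃ s ∈ q.pairs ∪ p.pairs, i ∈ s ∧ j ∈ s)

/-!
Induct on the number of connections of `q`. Walking backwards from a defect to the last
connected point `a` gives a connection `{a, c}` such that `a + 1` is a defect and all defects lie
in the arc `(a, c)`. Removing `{a, c}` leaves a link state `q'` with the extra defects `a` and `c`,
and `Γ(q, p)` is `Γ(q', p')` together with the edges `{a + 1, c + 1}` and `{a, c}`. By induction
the three points `a + 1`, `a`, `c` (all defects of `q'`) lie on three different paths of
`Γ(q', p')`, and `c + 1` lies on the path of `a`. Hence the two new edges join these three paths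
into one without closing a cycle, and the defects `a, c` of `q'` and `a + 1, c + 1` of `p'` drop
out, leaving exactly one defect of `q` and one of `p` on the new path.

That `c + 1` lies on the path of `a` is where the planarity of `q` enters: the induction carries
the stronger statement that the path through a defect `d + 1` of `p` ends at the first defect of
`q` after `d`. If `q` has no defect, removing any connection `{x, y}` leaves exactly the defects
`x` and `y`, whose two paths cover everything and are joined by the edge `{x, y}`.
-/

theorem ZMod.val_sub_pos {n : ℕ} {a b : ZMod n} (h : a ≠ b) : 0 < (a - b).val := by
  rw [Nat.pos_iff_ne_zero, Ne, ZMod.val_eq_zero, sub_eq_zero]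
  exact h

theorem ZMod.val_add_one_sub_self {n : ℕ} (a : ZMod n) (hn : 2 ≤ n) : (a + 1 - a).val = 1 := by
  rw [add_sub_cancel_left, ZMod.val_one_eq_one_mod, Nat.mod_eq_of_lt hn]

theorem ZMod.val_sub_add_val_sub {n : ℕ} [NeZero n] (a b c : ZMod n) :
    (a - b).val + (b - c).val = (a - c).val ∨ (a - b).val + (b - c).val = (a - c).val + n := by
  have h := ZMod.val_add (a - b) (b - c)
  rw [sub_add_sub_cancel] at h
  have := ZMod.val_lt (a - b)
  have := ZMod.val_lt (b - c)
  rcases Nat.lt_or_ge ((a - b).val + (b - c).val) n with hlt | hge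
  · rw [Nat.mod_eq_of_lt hlt] at h; omega
  · rw [Nat.mod_eq_sub_mod hge, Nat.mod_eq_of_lt (by omega)] at h; omega

theorem ZMod.two_le_of_ne {n : ℕ} [NeZero n] {a b : ZMod n} (h : a ≠ b) : 2 ≤ n := by
  by_contra hn
  obtain rfl : n = 1 := by have := NeZero.pos n; omega
  exact h (Subsingleton.elim a b)

theorem ZMod.val_sub_le_val_sub_add_one_self {n : ℕ} [NeZero n] (x c : ZMod n) :
    (x - (c + 1)).val ≤ (c - (c + 1)).val := by
  have := ZMod.val_lt (x - (c + 1))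
  rcases Nat.lt_or_ge n 2 with hn | hn
  · omega
  · have := val_add_one_sub_self c hn
    have := val_sub_add_val_sub c (c + 1) c
    have : (c - c).val = 0 := by simp
    omega

section CyclicOrder

open ZMod

variable {n : ℕ} [NeZero n]

theorem cyclicBetween_iff {i j k : ZMod n} :
    cyclicBetween n i j k ↔ 0 < (k - i).val ∧ (k - i).val < (j - i).val := by
  constructor
  · rintro ⟨m, hm0, hmj, rfl⟩
    rw [add_sub_cancel_left, ZMod.val_cast_of_lt (hmj.trans (ZMod.val_lt _))]
    exact ⟨hm0, hmj⟩
  · rintro ⟨h0, hk⟩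
    exact ⟨(k - i).val, h0, hk, by rw [ZMod.natCast_zmod_val, add_sub_cancel]⟩

theorem cyclicBetween_or_cyclicBetween_swap {i j k : ZMod n} (hij : i ≠ j) (hki : k ≠ i)
    (hkj : k ≠ j) : cyclicBetween n i j k ∨ cyclicBetween n j i k := by
  simp only [cyclicBetween_iff]
  have := val_sub_add_val_sub k j i
  have := val_sub_add_val_sub i j i
  have := val_sub_pos hki
  have := val_sub_pos hkj
  have := val_sub_pos hij.symm
  have : (i - i).val = 0 := by simp
  have := ZMod.val_lt (k - j)
  have := ZMod.val_lt (i - j)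
  have := ZMod.val_lt (k - i)
  omega

theorem cyclicBetween.not_swap {i j k : ZMod n} (h : cyclicBetween n i j k) :
    ¬ cyclicBetween n j i k := by
  rw [cyclicBetween_iff] at h ⊢
  have := val_sub_add_val_sub k j i
  have := val_sub_add_val_sub i j i
  have : (i - i).val = 0 := by simp
  have := ZMod.val_lt (i - j)
  omega

theorem cyclicBetween.rotate {i j k : ZMod n} (h : cyclicBetween n i j k) :
    cyclicBetween n j k i := by
  rw [cyclicBetween_iff] at h ⊢
  have := val_sub_add_val_sub i k j
  have := val_sub_add_val_sub k j i
  have := val_sub_add_val_sub i j i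
  have : (i - i).val = 0 := by simp
  have := ZMod.val_lt (i - j)
  have := ZMod.val_lt (k - j)
  have := ZMod.val_lt (i - k)
  have := ZMod.val_lt (j - i)
  omega

theorem cyclicBetween.two_le {i j k : ZMod n} (h : cyclicBetween n i j k) : 2 ≤ n := by
  refine two_le_of_ne (a := k) (b := i) fun hki => ?_
  rw [cyclicBetween_iff, hki, sub_self, ZMod.val_zero] at h
  exact h.1.false

theorem not_cyclicBetween_add_one (i k : ZMod n) : ¬ cyclicBetween n i (i + 1) k := by
  intro h
  have h1 := val_add_one_sub_self i h.two_le
  rw [cyclicBetween_iff] at h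
  omega

theorem not_cyclicBetween_add_one_right (i j : ZMod n) : ¬ cyclicBetween n i j (j + 1) := by
  intro h
  have h1 := val_add_one_sub_self j h.two_le
  rw [cyclicBetween_iff] at h
  have := val_sub_add_val_sub (j + 1) j i
  have := ZMod.val_lt (j - i)
  omega

theorem cyclicBetween_add_one {i j : ZMod n} (hji : j ≠ i) (hj : i + 1 ≠ j) :
    cyclicBetween n i j (i + 1) := by
  have h1 := val_add_one_sub_self i (two_le_of_ne hji)
  rw [cyclicBetween_iff, h1]
  have := val_sub_pos hji
  have h2 : (j - i).val ≠ 1 := fun h =>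
    hj (sub_left_inj.mp (ZMod.val_injective n (h1.trans h.symm)))
  omega

theorem cyclicBetween.of_add_one {i j a : ZMod n} (h : cyclicBetween n i j (a + 1))
    (ha : a ≠ i) : cyclicBetween n i j a := by
  have h1 := val_add_one_sub_self a h.two_le
  rw [cyclicBetween_iff] at h ⊢
  have := val_sub_add_val_sub (a + 1) a i
  have := val_sub_pos ha
  have := ZMod.val_lt (a - i)
  omega

theorem cyclicBetween.val_sub_lt {i j k : ZMod n} (h : cyclicBetween n i j k) :
    (j - k).val < (j - i).val := by
  rw [cyclicBetween_iff] at h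
  have := val_sub_add_val_sub j k i
  have := ZMod.val_lt (j - k)
  omega

theorem cyclicBetween.val_sub_add_one_lt {a c v : ZMod n} (h : cyclicBetween n a c v) :
    (a - (c + 1)).val < (v - (c + 1)).val := by
  have := val_add_one_sub_self c h.two_le
  rw [cyclicBetween_iff] at h
  have := val_sub_add_val_sub c (c + 1) c
  have := val_sub_add_val_sub c a (c + 1)
  have := val_sub_add_val_sub v a (c + 1)
  have : (c - c).val = 0 := by simp
  have := ZMod.val_lt (a - (c + 1))
  have := ZMod.val_lt (v - (c + 1))
  have := ZMod.val_lt (c - a)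
  omega

theorem cyclicBetween.val_sub_add_one_lt_val_sub_add_one {a c d : ZMod n}
    (h : cyclicBetween n a c d) : (c - (d + 1)).val < (a - (d + 1)).val := by
  have := val_add_one_sub_self d h.two_le
  rw [cyclicBetween_iff] at h
  have := val_sub_add_val_sub c d a
  have := val_sub_add_val_sub a d a
  have := val_sub_add_val_sub c (d + 1) d
  have := val_sub_add_val_sub a (d + 1) d
  have : (a - a).val = 0 := by simp
  have := ZMod.val_lt (c - d)
  have := ZMod.val_lt (a - d)
  have := ZMod.val_lt (c - (d + 1))
  have := ZMod.val_lt (a - (d + 1))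
  have := ZMod.val_lt (c - a)
  omega

theorem cyclicBetween_of_val_sub_lt {u c x a : ZMod n} (hcx : (c - u).val < (x - u).val)
    (hxa : (x - u).val < (a - u).val) : cyclicBetween n c a x := by
  rw [cyclicBetween_iff]
  have := val_sub_add_val_sub x c u
  have := val_sub_add_val_sub a c u
  have := ZMod.val_lt (x - c)
  have := ZMod.val_lt (a - c)
  omega

theorem eq_add_one_of_val_sub_lt_of_val_sub_le {a u x : ZMod n}
    (h₁ : (a - u).val < (x - u).val) (h₂ : (x - u).val ≤ (a + 1 - u).val) : x = a + 1 := by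
  have := ZMod.val_lt (x - u)
  have := val_add_one_sub_self a (by omega)
  have := val_sub_add_val_sub (a + 1) a u
  have := ZMod.val_lt (a + 1 - u)
  have h : (x - u).val = (a + 1 - u).val := by omega
  exact sub_left_inj.mp (ZMod.val_injective n h)

end CyclicOrder

/-- `x` is the first point of `D` met when walking upwards from `u`, starting at `u` itself. -/
def IsFirstFrom {n : ℕ} (D : Finset (ZMod n)) (u x : ZMod n) : Prop :=
  x ∈ D ∧ ∀ v ∈ D, (x - u).val ≤ (v - u).val

theorem Finset.erase_erase_union_pair {α : Type*} [DecidableEq α] {D : Finset α} {x y : α}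
    (hx : x ∉ D) (hy : y ∉ D) : ((D ∪ {x, y}).erase x).erase y = D := by
  ext v
  simp only [mem_erase, mem_union, mem_insert, mem_singleton]
  constructor
  · rintro ⟨hvy, hvx, hv | rfl | rfl⟩
    · exact hv
    · exact absurd rfl hvx
    · exact absurd rfl hvy
  · intro hv
    exact ⟨fun h => hy (h ▸ hv), fun h => hx (h ▸ hv), Or.inl hv⟩

namespace SimpleGraph

variable {V : Type*} {G : SimpleGraph V}

theorem reachable_sup_edge (G : SimpleGraph V) (u v : V) : (G ⊔ edge u v).Reachable u v := by
  by_cases h : u = v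
  · exact h ▸ .rfl
  · exact Adj.reachable (Or.inr ((edge_adj ..).mpr ⟨Or.inl ⟨rfl, rfl⟩, h⟩))

theorem Reachable.cases_sup_edge {u v i j : V} (h : (G ⊔ edge u v).Reachable i j) :
    G.Reachable i j ∨ (G.Reachable i u ∧ G.Reachable v j) ∨
      (G.Reachable i v ∧ G.Reachable u j) := by
  obtain ⟨w⟩ := h
  induction w with
  | nil => exact Or.inl .rfl
  | @cons i k j hik _ ih =>
    rcases hik with hik | hik
    · have hik := hik.reachable
      rcases ih with h | ⟨h₁, h₂⟩ | ⟨h₁, h₂⟩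
      · exact Or.inl (hik.trans h)
      · exact Or.inr (Or.inl ⟨hik.trans h₁, h₂⟩)
      · exact Or.inr (Or.inr ⟨hik.trans h₁, h₂⟩)
    · rw [edge_adj] at hik
      obtain ⟨⟨rfl, rfl⟩ | ⟨rfl, rfl⟩, -⟩ := hik
      · rcases ih with h | ⟨-, h⟩ | ⟨-, h⟩
        · exact Or.inr (Or.inl ⟨.rfl, h⟩)
        · exact Or.inr (Or.inl ⟨.rfl, h⟩)
        · exact Or.inl h
      · rcases ih with h | ⟨-, h⟩ | ⟨-, h⟩
        · exact Or.inr (Or.inr ⟨.rfl, h⟩)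
        · exact Or.inl h
        · exact Or.inr (Or.inr ⟨.rfl, h⟩)

theorem not_reachable_of_existsUnique {D : Set V} (hD : ∀ i, ∃! d ∈ D, G.Reachable i d)
    {u v x y : V} (hx : x ∈ D) (hy : y ∈ D) (hxy : x ≠ y) (hux : G.Reachable u x)
    (hvy : G.Reachable v y) : ¬ G.Reachable u v :=
  fun huv => hxy ((hD u).unique ⟨hx, hux⟩ ⟨hy, huv.trans hvy⟩)

theorem existsUnique_reachable_sup_edge [DecidableEq V] {D : Finset V}
    (hD : ∀ i, ∃! d ∈ D, G.Reachable i d) {u v x y : V} (hx : x ∈ D) (hy : y ∈ D) (hxy : x ≠ y)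
    (hux : G.Reachable u x) (hvy : G.Reachable v y) (i : V) :
    ∃! d ∈ D.erase y, (G ⊔ edge u v).Reachable i d := by
  have hle : G ≤ G ⊔ edge u v := le_sup_left
  have rep_eq {z d d'} (hd : d ∈ D) (hd' : d' ∈ D) (h : G.Reachable z d)
      (h' : G.Reachable z d') : d = d' := (hD z).unique ⟨hd, h⟩ ⟨hd', h'⟩
  obtain ⟨d, ⟨hdD, hid⟩, -⟩ := hD i
  by_cases hdy : d = y
  · subst hdy
    refine ⟨x, ⟨Finset.mem_erase.mpr ⟨hxy, hx⟩, ?_⟩, ?_⟩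
    · exact ((hid.trans hvy.symm).mono hle).trans
        ((reachable_sup_edge G u v).symm.trans (hux.mono hle))
    · rintro d' ⟨hd', hid'⟩
      obtain ⟨hd'y, hd'⟩ := Finset.mem_erase.mp hd'
      rcases hid'.cases_sup_edge with h | ⟨-, h⟩ | ⟨-, h⟩
      · exact absurd (rep_eq hd' hdD h hid) hd'y
      · exact absurd (rep_eq hd' hdD .rfl (h.symm.trans hvy)) hd'y
      · exact rep_eq hd' hx h hux
  · refine ⟨d, ⟨Finset.mem_erase.mpr ⟨hdy, hdD⟩, hid.mono hle⟩, ?_⟩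
    rintro d' ⟨hd', hid'⟩
    obtain ⟨hd'y, hd'⟩ := Finset.mem_erase.mp hd'
    rcases hid'.cases_sup_edge with h | ⟨-, h⟩ | ⟨h, -⟩
    · exact rep_eq hd' hdD h hid
    · exact absurd (rep_eq hd' hy .rfl (h.symm.trans hvy)) hd'y
    · exact absurd (rep_eq hdD hy hid (h.trans hvy)) hdy

end SimpleGraph

def pairsGraph {V : Type*} (S : Finset (Finset V)) : SimpleGraph V :=
  SimpleGraph.fromRel fun i j => ∃ s ∈ S, i ∈ s ∧ j ∈ s

section PairsGraph

variable {V : Type*}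

open SimpleGraph

theorem pairsGraph_adj {S : Finset (Finset V)} {i j : V} :
    (pairsGraph S).Adj i j ↔ i ≠ j ∧ ∃ s ∈ S, i ∈ s ∧ j ∈ s := by
  simp only [pairsGraph, fromRel_adj, and_comm (a := j ∈ _), or_self]

theorem pairsGraph_empty : pairsGraph (∅ : Finset (Finset V)) = ⊥ := by
  ext i j
  simp [pairsGraph]

theorem pairsGraph_mono {S T : Finset (Finset V)} (h : S ⊆ T) : pairsGraph S ≤ pairsGraph T := by
  intro i j
  simp only [pairsGraph_adj]
  exact fun ⟨hij, s, hs, hi, hj⟩ => ⟨hij, s, h hs, hi, hj⟩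

theorem pairsGraph_insert_pair [DecidableEq V] (a b : V) (S : Finset (Finset V)) :
    pairsGraph (insert {a, b} S) = pairsGraph S ⊔ edge a b := by
  ext i j
  rw [sup_adj, pairsGraph_adj, pairsGraph_adj, edge_adj, Finset.exists_mem_insert]
  simp only [Finset.mem_insert, Finset.mem_singleton]
  grind

end PairsGraph

namespace AnnularLS

def rotatePairs {n : ℕ} (S : Finset (Finset (ZMod n))) : Finset (Finset (ZMod n)) :=
  S.image fun s => s.image (· + 1)

theorem exists_mem_rotatePairs_iff {n : ℕ} {S : Finset (Finset (ZMod n))} {v : ZMod n} :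
    (∃ s ∈ rotatePairs S, v ∈ s) ↔ ∃ s ∈ S, v - 1 ∈ s := by
  simp [rotatePairs, sub_eq_add_neg]

variable {n : ℕ} [NeZero n] (q : AnnularLS n)

theorem mem_defects {i : ZMod n} : i ∈ q.defects ↔ ∀ s ∈ q.pairs, i ∉ s := by
  simp [defects]

theorem exists_mem_pairs_of_notMem_defects {i : ZMod n} (hi : i ∉ q.defects) :
    ∃ s ∈ q.pairs, i ∈ s := by
  simpa [mem_defects] using hi

theorem eq_of_mem_of_mem {s t : Finset (ZMod n)} (hs : s ∈ q.pairs) (ht : t ∈ q.pairs)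
    {i : ZMod n} (his : i ∈ s) (hit : i ∈ t) : s = t := by
  by_contra hst
  exact Finset.disjoint_left.mp (q.disj s hs t ht hst) his hit

theorem exists_eq_pair {s : Finset (ZMod n)} (hs : s ∈ q.pairs) {a : ZMod n} (ha : a ∈ s) :
    ∃ c, a ≠ c ∧ s = {a, c} := by
  obtain ⟨x, y, hxy, rfl⟩ := Finset.card_eq_two.mp (q.card_two s hs)
  rcases Finset.mem_insert.mp ha with rfl | ha
  · exact ⟨y, hxy, rfl⟩
  · obtain rfl := Finset.mem_singleton.mp ha
    exact ⟨x, hxy.symm, Finset.pair_comm x a⟩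

theorem card_filter_mem_pairs_val {i : ZMod n} (hi : ∃ s ∈ q.pairs, i ∈ s) :
    Multiset.card (q.pairs.val.filter (i ∈ ·)) = 1 := by
  obtain ⟨s, hs, his⟩ := hi
  rw [← Finset.filter_val, Finset.card_val, Finset.card_eq_one]
  exact ⟨s, Finset.eq_singleton_iff_unique_mem.mpr ⟨Finset.mem_filter.mpr ⟨hs, his⟩,
    fun t ht => q.eq_of_mem_of_mem (Finset.mem_filter.mp ht).1 hs (Finset.mem_filter.mp ht).2 his⟩⟩

theorem defects_eq_image {p : AnnularLS n} (hp : p.pairs = rotatePairs q.pairs) :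
    p.defects = q.defects.image (· + 1) := by
  ext v
  have hv : v ∈ q.defects.image (· + 1) ↔ v - 1 ∈ q.defects := by
    simp [sub_eq_add_neg]
  rw [hv, mem_defects, mem_defects, hp]
  simpa using exists_mem_rotatePairs_iff.not

theorem disjoint_rotatePairs (hd : q.defects.Nonempty) :
    Disjoint q.pairs (rotatePairs q.pairs) := by
  obtain ⟨d, hd⟩ := hd
  rw [Finset.disjoint_left]
  intro s hs hs'
  obtain ⟨t, ht, rfl⟩ := Finset.mem_image.mp hs'
  obtain ⟨x, y, hxy, rfl⟩ := Finset.card_eq_two.mp (q.card_two t ht)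
  have hx₁ : x + 1 ∈ Finset.image (· + 1) {x, y} := by simp
  have hy₁ : y + 1 ∈ Finset.image (· + 1) {x, y} := by simp
  by_cases hy : x + 1 = y
  · subst hy
    -- the connections `{x, x + 1}` and `{x + 1, x + 2}` share `x + 1`, so `x + 2 = x`
    have hst := q.eq_of_mem_of_mem hs ht hx₁ (by simp)
    have hx₂ : x + 1 + 1 = x := by
      rw [hst] at hy₁
      rcases Finset.mem_insert.mp hy₁ with h | h
      · exact h
      · exact absurd (add_right_cancel (Finset.mem_singleton.mp h)) hxy.symm
    rcases q.defects_one_side _ ht x (by simp) (x + 1) (by simp) hxy with h | h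
    · exact not_cyclicBetween_add_one x d (h d (q.mem_defects.mp hd))
    · refine not_cyclicBetween_add_one (x + 1) d ?_
      rw [hx₂]
      exact h d (q.mem_defects.mp hd)
  · exact not_cyclicBetween_add_one_right x y (q.interval_closed _ ht x (by simp) y (by simp) hxy
      _ hs _ hx₁ _ hy₁ (cyclicBetween_add_one hxy.symm hy))

def IsRemovable (s : Finset (ZMod n)) : Prop :=
  s ∈ q.pairs ∧ ∀ t ∈ q.pairs, t ≠ s → ∀ i ∈ t, ∀ j ∈ t, i ≠ j →
    (∀ d ∈ q.defects ∪ s, cyclicBetween n i j d) ∨ (∀ d ∈ q.defects ∪ s, cyclicBetween n j i d)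

theorem forall_notMem_erase_iff {s : Finset (ZMod n)} (hs : s ∈ q.pairs) {d : ZMod n} :
    (∀ t ∈ q.pairs.erase s, d ∉ t) ↔ d ∈ q.defects ∪ s := by
  rw [Finset.mem_union, mem_defects]
  constructor
  · intro h
    by_cases hds : d ∈ s
    · exact Or.inr hds
    · exact Or.inl fun t ht hdt =>
        h t (Finset.mem_erase.mpr ⟨fun hts => hds (hts ▸ hdt), ht⟩) hdt
  · rintro (h | h) t ht hdt
    · exact h t (Finset.mem_of_mem_erase ht) hdt
    · exact Finset.ne_of_mem_erase ht (q.eq_of_mem_of_mem (Finset.mem_of_mem_erase ht) hs hdt h)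

def erase (s : Finset (ZMod n)) (hs : q.IsRemovable s) : AnnularLS n where
  pairs := q.pairs.erase s
  card_two t ht := q.card_two t (Finset.mem_of_mem_erase ht)
  disj t ht u hu := q.disj t (Finset.mem_of_mem_erase ht) u (Finset.mem_of_mem_erase hu)
  interval_closed t ht i hi j hj hij u hu :=
    q.interval_closed t (Finset.mem_of_mem_erase ht) i hi j hj hij u (Finset.mem_of_mem_erase hu)
  defects_one_side t ht i hi j hj hij := by
    simp_rw [q.forall_notMem_erase_iff hs.1]
    exact hs.2 t (Finset.mem_of_mem_erase ht) (Finset.ne_of_mem_erase ht) i hi j hj hij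

theorem erase_pairs {s : Finset (ZMod n)} (hs : q.IsRemovable s) :
    (q.erase s hs).pairs = q.pairs.erase s := rfl

theorem defects_erase {s : Finset (ZMod n)} (hs : q.IsRemovable s) :
    (q.erase s hs).defects = q.defects ∪ s := by
  ext d
  exact ((q.erase s hs).mem_defects).trans (q.forall_notMem_erase_iff hs.1)

theorem isRemovable_of_defects_eq_empty (hD : q.defects = ∅) {s : Finset (ZMod n)}
    (hs : s ∈ q.pairs) : q.IsRemovable s := by
  refine ⟨hs, fun t ht hts i hi j hj hij => ?_⟩
  obtain ⟨x, y, hxy, rfl⟩ := Finset.card_eq_two.mp (q.card_two s hs)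
  have hx : x ∉ t := Finset.disjoint_right.mp (q.disj t ht _ hs hts) (by simp)
  have key {i j} (hi : i ∈ t) (hj : j ∈ t) (hij : i ≠ j) (hxij : cyclicBetween n i j x) :
      ∀ d ∈ q.defects ∪ {x, y}, cyclicBetween n i j d := by
    simp only [hD, Finset.empty_union, Finset.mem_insert, Finset.mem_singleton]
    rintro d (rfl | rfl)
    · exact hxij
    · exact q.interval_closed t ht i hi j hj hij _ hs _ (by simp) _ (by simp) hxij
  rcases cyclicBetween_or_cyclicBetween_swap (k := x) hij (fun h => hx (h ▸ hi))
      (fun h => hx (h ▸ hj)) with h | h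
  · exact Or.inl (key hi hj hij h)
  · exact Or.inr (key hj hi hij.symm h)

structure IsSafePair (a c : ZMod n) : Prop where
  mem_pairs : {a, c} ∈ q.pairs
  ne : a ≠ c
  add_one_mem_defects : a + 1 ∈ q.defects
  cyclicBetween_of_mem_defects : ∀ d ∈ q.defects, cyclicBetween n a c d

theorem exists_isSafePair (hd : q.defects.Nonempty) (hp : q.pairs.Nonempty) :
    ∃ a c, q.IsSafePair a c := by
  obtain ⟨d, hd⟩ := hd
  have hne : q.defectsᶜ.Nonempty := by
    obtain ⟨s, hs⟩ := hp
    obtain ⟨x, hx⟩ := Finset.card_pos.mp (by rw [q.card_two s hs]; norm_num : 0 < s.card)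
    exact ⟨x, Finset.mem_compl.mpr fun h => (q.mem_defects.mp h) s hs hx⟩
  -- `a` is the last connected point before the defect `d`
  obtain ⟨a, ha, hmin⟩ := Finset.exists_min_image _ (fun v => (d - v).val) hne
  rw [Finset.mem_compl] at ha
  have hbetween (v : ZMod n) (hv : cyclicBetween n a d v) : v ∈ q.defects := by
    by_contra hv'
    exact (hmin v (Finset.mem_compl.mpr hv')).not_gt hv.val_sub_lt
  obtain ⟨s, hs, has⟩ := q.exists_mem_pairs_of_notMem_defects ha
  obtain ⟨c, hac, rfl⟩ := q.exists_eq_pair hs has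
  have had : a ≠ d := fun h => ha (h ▸ hd)
  have hc : c ∉ q.defects := fun h => (q.mem_defects.mp h) _ hs (by simp)
  have hdac : cyclicBetween n a c d := by
    rcases cyclicBetween_or_cyclicBetween_swap had hac.symm (fun h => hc (h ▸ hd)) with h | h
    · exact absurd (hbetween c h) hc
    · exact h.rotate
  refine ⟨a, c, hs, hac, ?_, ?_⟩
  · by_cases h : a + 1 = d
    · exact h ▸ hd
    · exact hbetween _ (cyclicBetween_add_one had.symm h)
  · rcases q.defects_one_side _ hs a (by simp) c (by simp) hac with h | h
    · exact fun d' hd' => h d' (q.mem_defects.mp hd')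
    · exact absurd (h d (q.mem_defects.mp hd)) hdac.not_swap

def rotationGraph : SimpleGraph (ZMod n) :=
  pairsGraph (q.pairs ∪ rotatePairs q.pairs)

theorem pairGraph_eq_rotationGraph {p : AnnularLS n} (hp : p.pairs = rotatePairs q.pairs) :
    pairGraph n q p = q.rotationGraph := by
  rw [pairGraph, hp]
  rfl

/-- The last field, saying that the path through the defect `d + 1` of the rotation ends at the
first defect of `q` after `d`, strengthens the induction. -/
structure IsPathForest : Prop where
  isAcyclic : q.rotationGraph.IsAcyclic
  existsUnique_defect (i : ZMod n) : ∃! d ∈ q.defects, q.rotationGraph.Reachable i d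
  existsUnique_rotatedDefect (i : ZMod n) :
    ∃! d ∈ q.defects.image (· + 1), q.rotationGraph.Reachable i d
  reachable_of_isFirstFrom {d x : ZMod n} (hd : d ∈ q.defects)
    (hx : IsFirstFrom q.defects (d + 1) x) : q.rotationGraph.Reachable (d + 1) x

variable {q}

open SimpleGraph

theorem isPathForest_of_pairs_eq_empty (hq : q.pairs = ∅) : q.IsPathForest := by
  have hG : q.rotationGraph = ⊥ := by
    simp [rotationGraph, rotatePairs, hq, pairsGraph_empty]
  have hD (i : ZMod n) : i ∈ q.defects := q.mem_defects.mpr (by simp [hq])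
  refine ⟨hG ▸ isAcyclic_bot, fun i => ⟨i, ⟨hD i, .rfl⟩, ?_⟩, fun i => ⟨i, ⟨?_, .rfl⟩, ?_⟩, ?_⟩
  · exact fun d ⟨_, hid⟩ => (reachable_bot.mp (hG ▸ hid)).symm
  · exact Finset.mem_image.mpr ⟨i - 1, hD _, sub_add_cancel i 1⟩
  · exact fun d ⟨_, hid⟩ => (reachable_bot.mp (hG ▸ hid)).symm
  · intro d x _ hx
    have := hx.2 (d + 1) (hD _)
    rw [sub_self, ZMod.val_zero, Nat.le_zero, ZMod.val_eq_zero, sub_eq_zero] at this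
    exact this ▸ .rfl

namespace IsSafePair

variable {a c : ZMod n}

theorem isRemovable (h : q.IsSafePair a c) : q.IsRemovable {a, c} := by
  refine ⟨h.mem_pairs, fun t ht hts i hi j hj hij => ?_⟩
  have ha : a ∉ t := Finset.disjoint_right.mp (q.disj t ht _ h.mem_pairs hts) (by simp)
  have key {i j} (hi : i ∈ t) (hj : j ∈ t) (hij : i ≠ j)
      (hD : ∀ d ∈ q.defects, cyclicBetween n i j d) :
      ∀ d ∈ q.defects ∪ {a, c}, cyclicBetween n i j d := by
    have ha' : cyclicBetween n i j a :=
      (hD _ h.add_one_mem_defects).of_add_one fun e => ha (e ▸ hi)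
    simp only [Finset.mem_union, Finset.mem_insert, Finset.mem_singleton]
    rintro d (hd | rfl | rfl)
    · exact hD d hd
    · exact ha'
    · exact q.interval_closed t ht i hi j hj hij _ h.mem_pairs _ (by simp) _ (by simp) ha'
  rcases q.defects_one_side t ht i hi j hj hij with hD | hD
  · exact Or.inl (key hi hj hij fun d hd => hD d (q.mem_defects.mp hd))
  · exact Or.inr (key hj hi hij.symm fun d hd => hD d (q.mem_defects.mp hd))

def erase (h : q.IsSafePair a c) : AnnularLS n := q.erase {a, c} h.isRemovable

theorem defects_erase (h : q.IsSafePair a c) : h.erase.defects = q.defects ∪ {a, c} :=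
  q.defects_erase h.isRemovable

theorem notMem_defects_left (h : q.IsSafePair a c) : a ∉ q.defects :=
  fun ha => (q.mem_defects.mp ha) _ h.mem_pairs (by simp)

theorem notMem_defects_right (h : q.IsSafePair a c) : c ∉ q.defects :=
  fun hc => (q.mem_defects.mp hc) _ h.mem_pairs (by simp)

theorem add_one_ne_left (h : q.IsSafePair a c) : a + 1 ≠ a :=
  fun e => h.notMem_defects_left (e ▸ h.add_one_mem_defects)

theorem add_one_ne_right (h : q.IsSafePair a c) : a + 1 ≠ c :=
  fun e => h.notMem_defects_right (e ▸ h.add_one_mem_defects)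

theorem rotationGraph_eq (h : q.IsSafePair a c) :
    q.rotationGraph = h.erase.rotationGraph ⊔ edge (a + 1) (c + 1) ⊔ edge a c := by
  have hq : q.pairs = insert {a, c} h.erase.pairs := (Finset.insert_erase h.mem_pairs).symm
  rw [rotationGraph, rotationGraph, hq, rotatePairs, Finset.image_insert, ← rotatePairs]
  simp only [Finset.image_insert, Finset.image_singleton, Finset.insert_union,
    Finset.union_insert, pairsGraph_insert_pair]
  exact sup_right_comm _ _ _

theorem isFirstFrom_add_one (h : q.IsSafePair a c) :
    IsFirstFrom (q.defects ∪ {a, c}) (c + 1) a := by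
  refine ⟨by simp, fun v hv => ?_⟩
  simp only [Finset.mem_union, Finset.mem_insert, Finset.mem_singleton] at hv
  rcases hv with hv | rfl | rfl
  · exact (h.cyclicBetween_of_mem_defects v hv).val_sub_add_one_lt.le
  · exact le_rfl
  · exact ZMod.val_sub_le_val_sub_add_one_self a v

theorem isFirstFrom_erase (h : q.IsSafePair a c) {d x : ZMod n} (hd : d ∈ q.defects)
    (hx : IsFirstFrom q.defects (d + 1) x) :
    (x = a + 1 ∧ IsFirstFrom (q.defects ∪ {a, c}) (d + 1) c) ∨
      IsFirstFrom (q.defects ∪ {a, c}) (d + 1) x := by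
  by_cases hax : (a - (d + 1)).val < (x - (d + 1)).val
  · have hx_eq := eq_add_one_of_val_sub_lt_of_val_sub_le hax (hx.2 _ h.add_one_mem_defects)
    have hca := (h.cyclicBetween_of_mem_defects d hd).val_sub_add_one_lt_val_sub_add_one
    refine Or.inl ⟨hx_eq, by simp, fun v hv => ?_⟩
    simp only [Finset.mem_union, Finset.mem_insert, Finset.mem_singleton] at hv
    rcases hv with hv | rfl | rfl
    · exact (hca.trans (hax.trans_le (hx.2 v hv))).le
    · exact hca.le
    · exact le_rfl
  · refine Or.inr ⟨Finset.mem_union_left _ hx.1, fun v hv => ?_⟩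
    simp only [Finset.mem_union, Finset.mem_insert, Finset.mem_singleton] at hv
    rcases hv with hv | rfl | rfl
    · exact hx.2 v hv
    · exact not_lt.mp hax
    · by_contra hvx
      have hxa : x ≠ a := fun e => h.notMem_defects_left (e ▸ hx.1)
      have : (x - (d + 1)).val ≠ (a - (d + 1)).val := fun e =>
        hxa (sub_left_inj.mp (ZMod.val_injective n e))
      exact (h.cyclicBetween_of_mem_defects x hx.1).not_swap
        (cyclicBetween_of_val_sub_lt (not_le.mp hvx) (by omega))

theorem mem_defects_erase_left (h : q.IsSafePair a c) : a ∈ h.erase.defects := by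
  simp [h.defects_erase]

theorem mem_defects_erase_right (h : q.IsSafePair a c) : c ∈ h.erase.defects := by
  simp [h.defects_erase]

theorem add_one_mem_defects_erase (h : q.IsSafePair a c) : a + 1 ∈ h.erase.defects := by
  simp [h.defects_erase, h.add_one_mem_defects]

theorem le_rotationGraph (h : q.IsSafePair a c) :
    h.erase.rotationGraph ⊔ edge (a + 1) (c + 1) ≤ q.rotationGraph :=
  h.rotationGraph_eq ▸ le_sup_left

theorem reachable_add_one_erase (h : q.IsSafePair a c) (ih : h.erase.IsPathForest) :
    h.erase.rotationGraph.Reachable (c + 1) a :=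
  ih.reachable_of_isFirstFrom h.mem_defects_erase_right
    (by rw [h.defects_erase]; exact h.isFirstFrom_add_one)

theorem reachable_sup_edge_add_one (h : q.IsSafePair a c) (ih : h.erase.IsPathForest) :
    (h.erase.rotationGraph ⊔ edge (a + 1) (c + 1)).Reachable a (a + 1) :=
  ((h.reachable_add_one_erase ih).symm.mono le_sup_left).trans (reachable_sup_edge _ _ _).symm

theorem existsUnique_defect_sup_edge (h : q.IsSafePair a c) (ih : h.erase.IsPathForest)
    (i : ZMod n) :
    ∃! d ∈ h.erase.defects.erase a, (h.erase.rotationGraph ⊔ edge (a + 1) (c + 1)).Reachable i d :=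
  existsUnique_reachable_sup_edge ih.existsUnique_defect h.add_one_mem_defects_erase
    h.mem_defects_erase_left h.add_one_ne_left .rfl (h.reachable_add_one_erase ih) i

theorem not_reachable_sup_edge (h : q.IsSafePair a c) (ih : h.erase.IsPathForest) :
    ¬ (h.erase.rotationGraph ⊔ edge (a + 1) (c + 1)).Reachable a c :=
  not_reachable_of_existsUnique (h.existsUnique_defect_sup_edge ih)
    (Finset.mem_erase.mpr ⟨h.add_one_ne_left, h.add_one_mem_defects_erase⟩)
    (Finset.mem_erase.mpr ⟨h.ne.symm, h.mem_defects_erase_right⟩) h.add_one_ne_right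
    (h.reachable_sup_edge_add_one ih) .rfl

theorem isAcyclic (h : q.IsSafePair a c) (ih : h.erase.IsPathForest) :
    q.rotationGraph.IsAcyclic := by
  have hG₁ := ih.isAcyclic.sup_edge_of_not_reachable
    (not_reachable_of_existsUnique ih.existsUnique_defect h.add_one_mem_defects_erase
      h.mem_defects_erase_left h.add_one_ne_left .rfl (h.reachable_add_one_erase ih))
  exact h.rotationGraph_eq ▸ hG₁.sup_edge_of_not_reachable (h.not_reachable_sup_edge ih)

theorem existsUnique_defect (h : q.IsSafePair a c) (ih : h.erase.IsPathForest) (i : ZMod n) :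
    ∃! d ∈ q.defects, q.rotationGraph.Reachable i d := by
  have hq := existsUnique_reachable_sup_edge (h.existsUnique_defect_sup_edge ih)
    (Finset.mem_erase.mpr ⟨h.add_one_ne_left, h.add_one_mem_defects_erase⟩)
    (Finset.mem_erase.mpr ⟨h.ne.symm, h.mem_defects_erase_right⟩) h.add_one_ne_right
    (h.reachable_sup_edge_add_one ih) .rfl i
  rwa [← h.rotationGraph_eq, h.defects_erase,
    Finset.erase_erase_union_pair h.notMem_defects_left h.notMem_defects_right] at hq

theorem existsUnique_rotatedDefect (h : q.IsSafePair a c) (ih : h.erase.IsPathForest)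
    (i : ZMod n) : ∃! d ∈ q.defects.image (· + 1), q.rotationGraph.Reachable i d := by
  have hmem {D : Finset (ZMod n)} {x : ZMod n} : x + 1 ∈ D.image (· + 1) ↔ x ∈ D :=
    (add_left_injective 1).mem_finset_image
  have ha₁c₁ : a + 1 ≠ c + 1 := fun e => h.ne (add_right_cancel e)
  have hp₁ := existsUnique_reachable_sup_edge ih.existsUnique_rotatedDefect
    (hmem.mpr h.mem_defects_erase_left) (hmem.mpr h.mem_defects_erase_right) ha₁c₁ .rfl .rfl
  obtain ⟨z, ⟨hz, hcz⟩, -⟩ := hp₁ c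
  have hp := existsUnique_reachable_sup_edge hp₁ hz
    (Finset.mem_erase.mpr ⟨ha₁c₁, hmem.mpr h.mem_defects_erase_left⟩)
    (fun e => h.not_reachable_sup_edge ih ((h.reachable_sup_edge_add_one ih).trans (e ▸ hcz.symm)))
    hcz (h.reachable_sup_edge_add_one ih) i
  have hDp : h.erase.defects.image (· + 1) = q.defects.image (· + 1) ∪ {c + 1, a + 1} := by
    rw [h.defects_erase, Finset.image_union, Finset.pair_comm]
    simp
  rwa [edge_comm c a, ← h.rotationGraph_eq, hDp, Finset.erase_erase_union_pair
    (fun e => h.notMem_defects_right (hmem.mp e)) (fun e => h.notMem_defects_left (hmem.mp e))]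
    at hp

theorem reachable_of_isFirstFrom (h : q.IsSafePair a c) (ih : h.erase.IsPathForest)
    {d x : ZMod n} (hd : d ∈ q.defects) (hx : IsFirstFrom q.defects (d + 1) x) :
    q.rotationGraph.Reachable (d + 1) x := by
  have hle : h.erase.rotationGraph ≤ q.rotationGraph := le_sup_left.trans h.le_rotationGraph
  have hd' : d ∈ h.erase.defects := by simp [h.defects_erase, hd]
  rcases h.isFirstFrom_erase hd hx with ⟨rfl, hfirst⟩ | hfirst
  · have hdc := ih.reachable_of_isFirstFrom hd' (by rw [h.defects_erase]; exact hfirst)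
    have hca : q.rotationGraph.Reachable c a :=
      h.rotationGraph_eq ▸ (reachable_sup_edge _ a c).symm
    exact ((hdc.mono hle).trans hca).trans
      ((h.reachable_sup_edge_add_one ih).mono h.le_rotationGraph)
  · exact (ih.reachable_of_isFirstFrom hd' (by rw [h.defects_erase]; exact hfirst)).mono hle

end IsSafePair

theorem IsPathForest.of_isSafePair {a c : ZMod n} (h : q.IsSafePair a c)
    (ih : h.erase.IsPathForest) : q.IsPathForest :=
  ⟨h.isAcyclic ih, h.existsUnique_defect ih, h.existsUnique_rotatedDefect ih,
    h.reachable_of_isFirstFrom ih⟩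

theorem isPathForest (q : AnnularLS n) (hd : q.defects.Nonempty) : q.IsPathForest := by
  induction hN : q.pairs.card generalizing q with
  | zero => exact isPathForest_of_pairs_eq_empty (Finset.card_eq_zero.mp hN)
  | succ N ih =>
    obtain ⟨a, c, h⟩ := q.exists_isSafePair hd (Finset.card_pos.mp (by omega))
    refine .of_isSafePair h (ih _ ?_ ?_)
    · rw [h.defects_erase]
      exact hd.mono Finset.subset_union_left
    · rw [IsSafePair.erase, erase_pairs, Finset.card_erase_of_mem h.mem_pairs, hN]
      rfl

theorem reachable_of_defects_eq_empty (hD : q.defects = ∅) (i j : ZMod n) :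
    q.rotationGraph.Reachable i j := by
  obtain ⟨s, hs, -⟩ := q.exists_mem_pairs_of_notMem_defects (i := i) (by simp [hD])
  obtain ⟨x, y, hxy, rfl⟩ := Finset.card_eq_two.mp (q.card_two _ hs)
  have hrem := q.isRemovable_of_defects_eq_empty hD hs
  have hD' : (q.erase _ hrem).defects = {x, y} := by
    rw [defects_erase, hD, Finset.empty_union]
  have hF := (q.erase _ hrem).isPathForest (by simp [hD'])
  have hle : (q.erase _ hrem).rotationGraph ≤ q.rotationGraph :=
    pairsGraph_mono (Finset.union_subset_union (Finset.erase_subset _ _)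
      (Finset.image_subset_image (Finset.erase_subset _ _)))
  have hyx : q.rotationGraph.Adj y x :=
    pairsGraph_adj.mpr ⟨hxy.symm, _, Finset.mem_union_left _ hs, by simp, by simp⟩
  have hx (v : ZMod n) : q.rotationGraph.Reachable v x := by
    obtain ⟨d, ⟨hd, hvd⟩, -⟩ := hF.existsUnique_defect v
    rw [hD', Finset.mem_insert, Finset.mem_singleton] at hd
    rcases hd with rfl | rfl
    · exact hvd.mono hle
    · exact (hvd.mono hle).trans hyx.reachable
  exact (hx i).trans (hx j).symm

end AnnularLS

/-- Let `p` be the rotation of the annular link state `q` by one place.  If `q` has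
`t ≥ 1` defects, the pair graph `Γ(q,p)` is a disjoint union of `t` paths, each containing
exactly one defect of `q` and one of `p` (so it is acyclic, `q` and `p` share no
connection, and every vertex reaches a unique defect of `q` and of `p`).  If `t = 0`,
then `Γ(q,p)` is a single cycle through all `n` vertices: every vertex lies on exactly
two edges, counted with multiplicity, and the graph is connected. -/
theorem stmt_12 (n : ℕ) [NeZero n] (q p : AnnularLS n)
    (hp : p.pairs = q.pairs.image (fun s => s.image (· + 1)))
    (t : ℕ) (ht : q.defects.card = t) :
    (1 ≤ t →
      Disjoint q.pairs p.pairs ∧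
      (pairGraph n q p).IsAcyclic ∧
      (∀ i : ZMod n, ∃! d : ZMod n, d ∈ q.defects ∧ (pairGraph n q p).Reachable i d) ∧
      (∀ i : ZMod n, ∃! d : ZMod n, d ∈ p.defects ∧ (pairGraph n q p).Reachable i d)) ∧
    (t = 0 →
      (∀ i j : ZMod n, (pairGraph n q p).Reachable i j) ∧
      (∀ i : ZMod n,
        Multiset.card ((q.pairs.val + p.pairs.val).filter (fun s => i ∈ s)) = 2)) := by
  have hp : p.pairs = AnnularLS.rotatePairs q.pairs := hp
  rw [q.pairGraph_eq_rotationGraph hp]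
  refine ⟨fun ht₁ => ?_, fun ht₀ => ?_⟩
  · have hd : q.defects.Nonempty := Finset.card_pos.mp (ht ▸ ht₁)
    have hF := q.isPathForest hd
    rw [q.defects_eq_image hp, hp]
    exact ⟨q.disjoint_rotatePairs hd, hF.isAcyclic, hF.existsUnique_defect,
      hF.existsUnique_rotatedDefect⟩
  · have hD : q.defects = ∅ := Finset.card_eq_zero.mp (ht.trans ht₀)
    have hmatched (i : ZMod n) : ∃ s ∈ q.pairs, i ∈ s :=
      q.exists_mem_pairs_of_notMem_defects (by simp [hD])
    refine ⟨AnnularLS.reachable_of_defects_eq_empty hD, fun i => ?_⟩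
    rw [Multiset.filter_add, Multiset.card_add, q.card_filter_mem_pairs_val (hmatched i),
      p.card_filter_mem_pairs_val
        (by rw [hp]; exact AnnularLS.exists_mem_rotatePairs_iff.mpr (hmatched _))]
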